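/- Let α > 0, λ ∈ (0,1), d ≥ 2, and β > d + α. Define a sequence (a_j) of positive integers with a_1 = K⁴ and a_{j+1} = ⌊(1+λ) a_j⌋ + 1. Suppose (q_j) is a sequence in [0,1] satisfying q_1 ≤ 2^{-α a_1} and the recursion q_j ≤ C(e^{-K a_j} + 2^{2dλ a_{j-1}} q_{j-1}² + 2^{(d-β)λ a_{j-1}} q_{j-1}) for all j ≥ 2. If λ < α/(2d + α), d - β < -α, and K is sufficiently large (depending on C, α, λ, β, d), then q_j ≤ 2^{-α a_j} for all j ≥ 1. -/

import Mathlib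

/-!
Write `A = a_{j-1}`, `B = a_j ≤ (1 + λ) A + 1` and assume `q_{j-1} ≤ 2^{-α A}`. Then the three
terms of the recursion are at most `2^{-α B}` times `e^{-K}`, `2^{ε₂ K + α}` and `2^{ε₁ K + α}`,
where `ε₂ = 2dλ - 2α + α(1 + λ)` and `ε₁ = (d - β)λ - α + α(1 + λ)` are negative by the hypotheses
`λ < α / (2d + α)` and `d - β < -α`; this needs only `A ≥ a_1 = K⁴ ≥ K`. For large `K` the
sum of the three factors times `C` is at most `1`, which closes the induction.
-/

namespace Stmt14

open Filter Real Topology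

section FloorRecursion

variable {lam : ℝ} {x y : ℕ}

lemma cast_le_of_eq_floor_add_one (h : (y : ℤ) = ⌊(1 + lam) * (x : ℝ)⌋ + 1) :
    (y : ℝ) ≤ (1 + lam) * x + 1 := by
  have h' : (y : ℝ) = ⌊(1 + lam) * (x : ℝ)⌋ + 1 := by exact_mod_cast h
  linarith [Int.floor_le ((1 + lam) * (x : ℝ))]

lemma lt_of_eq_floor_add_one (hlam : 0 ≤ lam) (h : (y : ℤ) = ⌊(1 + lam) * (x : ℝ)⌋ + 1) :
    x < y := by
  have h' : (y : ℝ) = ⌊(1 + lam) * (x : ℝ)⌋ + 1 := by exact_mod_cast h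
  have hx : (x : ℝ) ≤ (1 + lam) * x := le_mul_of_one_le_left (Nat.cast_nonneg x) (by linarith)
  exact_mod_cast (by linarith [Int.lt_floor_add_one ((1 + lam) * (x : ℝ))] : (x : ℝ) < y)

lemma le_of_floor_recursion {a : ℕ → ℕ} (hlam : 0 ≤ lam)
    (ha : ∀ j, 1 ≤ j → (a (j + 1) : ℤ) = ⌊(1 + lam) * (a j : ℝ)⌋ + 1) {j : ℕ} (hj : 1 ≤ j) :
    a 1 ≤ a j := by
  induction j, hj using Nat.le_induction with
  | base => rfl
  | succ n hn ih => exact ih.trans (lt_of_eq_floor_add_one hlam (ha n hn)).le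

end FloorRecursion

section RecursionStep

variable {b α lam K A B : ℝ}

lemma exp_neg_mul_le (hb : 0 < b) (hK : α * log b + 1 ≤ K) (hKB : K ≤ B) (hB : 0 ≤ B) :
    exp (-K * B) ≤ exp (-K) * b ^ (-(α * B)) := by
  rw [rpow_def_of_pos hb, ← exp_add]
  exact exp_le_exp.mpr (by nlinarith)

lemma rpow_le_rpow_mul_rpow_neg (hb : 1 ≤ b) (hα : 0 ≤ α) {ε : ℝ} (hε : ε ≤ 0) (hKA : K ≤ A)
    (hB : B ≤ (1 + lam) * A + 1) :
    b ^ (ε * A - α * (1 + lam) * A) ≤ b ^ (ε * K + α) * b ^ (-(α * B)) := by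
  rw [← rpow_add (by linarith)]
  exact rpow_le_rpow_of_exponent_le hb (by nlinarith)

lemma recursion_step_le {C r₁ r₂ q : ℝ} (hα : 0 ≤ α) (hC : 0 ≤ C)
    (hr₂ : r₂ - 2 * α + α * (1 + lam) ≤ 0) (hr₁ : r₁ - α + α * (1 + lam) ≤ 0)
    (hq0 : 0 ≤ q) (hq : q ≤ 2 ^ (-(α * A))) (hK : α * log 2 + 1 ≤ K) (hKA : K ≤ A)
    (hAB : A ≤ B) (hB : B ≤ (1 + lam) * A + 1) :
    C * (exp (-K * B) + 2 ^ (r₂ * A) * q ^ 2 + 2 ^ (r₁ * A) * q) ≤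
      C * (exp (-K) + 2 ^ ((r₂ - 2 * α + α * (1 + lam)) * K + α) +
        2 ^ ((r₁ - α + α * (1 + lam)) * K + α)) * 2 ^ (-(α * B)) := by
  have hB0 : 0 ≤ B := by
    linarith [mul_nonneg hα (log_nonneg one_le_two)]
  have hexp := exp_neg_mul_le two_pos hK (hKA.trans hAB) hB0
  have hquad : 2 ^ (r₂ * A) * q ^ 2 ≤
      2 ^ ((r₂ - 2 * α + α * (1 + lam)) * K + α) * 2 ^ (-(α * B)) := calc
    _ ≤ (2 : ℝ) ^ (r₂ * A) * (2 ^ (-(α * A))) ^ 2 := by gcongr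
    _ = 2 ^ ((r₂ - 2 * α + α * (1 + lam)) * A - α * (1 + lam) * A) := by
      rw [← rpow_natCast, ← rpow_mul zero_le_two, ← rpow_add two_pos]
      ring_nf
    _ ≤ _ := rpow_le_rpow_mul_rpow_neg one_le_two hα hr₂ hKA hB
  have hlin : 2 ^ (r₁ * A) * q ≤
      2 ^ ((r₁ - α + α * (1 + lam)) * K + α) * 2 ^ (-(α * B)) := calc
    _ ≤ (2 : ℝ) ^ (r₁ * A) * 2 ^ (-(α * A)) := by gcongr
    _ = 2 ^ ((r₁ - α + α * (1 + lam)) * A - α * (1 + lam) * A) := by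
      rw [← rpow_add two_pos]
      ring_nf
    _ ≤ _ := rpow_le_rpow_mul_rpow_neg one_le_two hα hr₁ hKA hB
  rw [mul_assoc]
  gcongr
  linarith

end RecursionStep

lemma tendsto_rpow_mul_add_atTop_nhds_zero {b ε : ℝ} (hb : 1 < b) (hε : ε < 0) (c : ℝ) :
    Tendsto (fun x : ℝ => b ^ (ε * x + c)) atTop (𝓝 0) :=
  (tendsto_rpow_atBot_of_base_gt_one b hb).comp
    (tendsto_atBot_add_const_right _ c (tendsto_id.const_mul_atTop_of_neg hε))

theorem stmt14_general (d : ℕ) (α lam β C : ℝ)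
    (hα : 0 < α) (hlam0 : 0 < lam)
    (hlam : lam < α / (2 * (d : ℝ) + α)) (hdβ : (d : ℝ) - β < -α) (hC : 0 < C) :
    ∃ K₀ : ℕ, ∀ K : ℕ, K₀ ≤ K →
      ∀ (a : ℕ → ℕ) (q : ℕ → ℝ),
        a 1 = K ^ 4 →
        (∀ j : ℕ, 1 ≤ j → (a (j + 1) : ℤ) = ⌊(1 + lam) * (a j : ℝ)⌋ + 1) →
        (∀ j : ℕ, 0 ≤ q j ∧ q j ≤ 1) →
        q 1 ≤ (2 : ℝ) ^ (-(α * (a 1 : ℝ))) →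
        (∀ j : ℕ, 2 ≤ j →
          q j ≤ C * (Real.exp (-(K : ℝ) * (a j : ℝ)) +
            (2 : ℝ) ^ (2 * (d : ℝ) * lam * (a (j - 1) : ℝ)) * q (j - 1) ^ 2 +
            (2 : ℝ) ^ (((d : ℝ) - β) * lam * (a (j - 1) : ℝ)) * q (j - 1))) →
        ∀ j : ℕ, 1 ≤ j → q j ≤ (2 : ℝ) ^ (-(α * (a j : ℝ))) := by
  set ε₂ : ℝ := 2 * d * lam - 2 * α + α * (1 + lam)
  set ε₁ : ℝ := (d - β) * lam - α + α * (1 + lam)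
  have hε₂ : ε₂ < 0 := by
    have := (lt_div_iff₀ (by positivity)).mp hlam
    linarith
  have hε₁ : ε₁ < 0 := by nlinarith
  have hlim : Tendsto (fun K : ℝ => C * (exp (-K) + 2 ^ (ε₂ * K + α) + 2 ^ (ε₁ * K + α)))
      atTop (𝓝 0) := by
    simpa using ((tendsto_exp_neg_atTop_nhds_zero.add
      (tendsto_rpow_mul_add_atTop_nhds_zero one_lt_two hε₂ α)).add
      (tendsto_rpow_mul_add_atTop_nhds_zero one_lt_two hε₁ α)).const_mul C
  obtain ⟨K₀, hK₀⟩ := eventually_atTop.mp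
    ((tendsto_natCast_atTop_atTop.eventually_ge_atTop (α * log 2 + 1)).and
      ((hlim.comp tendsto_natCast_atTop_atTop).eventually_le_const one_pos))
  refine ⟨K₀, fun K hK a q ha1 ha hq hq1 hqrec j hj => ?_⟩
  obtain ⟨hKlog, hKC⟩ := hK₀ K hK
  induction j, hj using Nat.le_induction with
  | base => exact hq1
  | succ n hn ih =>
    have hKn : (K : ℝ) ≤ a n := by
      exact_mod_cast (Nat.le_self_pow (by norm_num) K).trans
        (ha1 ▸ le_of_floor_recursion hlam0.le ha hn)
    calc q (n + 1) ≤ _ := by simpa using hqrec (n + 1) (by omega)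
      _ ≤ _ := recursion_step_le hα.le hC.le hε₂.le hε₁.le (hq n).1 ih hKlog hKn
          (by exact_mod_cast (lt_of_eq_floor_add_one hlam0.le (ha n hn)).le)
          (cast_le_of_eq_floor_add_one (ha n hn))
      _ ≤ _ := mul_le_of_le_one_left (by positivity) hKC

/-- (Induction for probabilities of bad boxes.)  Let `α > 0`,
`λ ∈ (0,1)`, `d ≥ 2`, `β > d + α`, `C > 0` with `λ < α/(2d + α)` and `d - β < -α`.
Then for all sufficiently large `K` (depending on `C, α, λ, β, d`): if `a_1 = K⁴`,
`a_{j+1} = ⌊(1+λ)a_j⌋ + 1`, the `q_j ∈ [0,1]` satisfy `q_1 ≤ 2^{-α a_1}` and, for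
`j ≥ 2`, `q_j ≤ C(e^{-K a_j} + 2^{2dλ a_{j-1}} q_{j-1}² + 2^{(d-β)λ a_{j-1}} q_{j-1})`,
then `q_j ≤ 2^{-α a_j}` for all `j ≥ 1`. -/
theorem stmt14 (d : ℕ) (hd : 2 ≤ d) (α lam β C : ℝ)
    (hα : 0 < α) (hlam0 : 0 < lam) (hlam1 : lam < 1)
    (hβ : (d : ℝ) + α < β)
    (hlam : lam < α / (2 * (d : ℝ) + α)) (hdβ : (d : ℝ) - β < -α) (hC : 0 < C) :
    ∃ K₀ : ℕ, ∀ K : ℕ, K₀ ≤ K →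
      ∀ (a : ℕ → ℕ) (q : ℕ → ℝ),
        a 1 = K ^ 4 →
        (∀ j : ℕ, 1 ≤ j → (a (j + 1) : ℤ) = ⌊(1 + lam) * (a j : ℝ)⌋ + 1) →
        (∀ j : ℕ, 0 ≤ q j ∧ q j ≤ 1) →
        q 1 ≤ (2 : ℝ) ^ (-(α * (a 1 : ℝ))) →
        (∀ j : ℕ, 2 ≤ j →
          q j ≤ C * (Real.exp (-(K : ℝ) * (a j : ℝ)) +
            (2 : ℝ) ^ (2 * (d : ℝ) * lam * (a (j - 1) : ℝ)) * q (j - 1) ^ 2 +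
            (2 : ℝ) ^ (((d : ℝ) - β) * lam * (a (j - 1) : ℝ)) * q (j - 1))) →
        ∀ j : ℕ, 1 ≤ j → q j ≤ (2 : ℝ) ^ (-(α * (a j : ℝ))) :=
  stmt14_general d α lam β C hα hlam0 hlam hdβ hC

end Stmt14
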